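/- Define Γ^0 := {T ∈ 𝒢^× : T 𝒢^0 T^{-1} ⊆ 𝒢^0}, Γ^n := {T ∈ 𝒢^× : T 𝒢^n T^{-1} ⊆ 𝒢^n}, Γ̌^0 := {T ∈ 𝒢^× : T̂ 𝒢^0 T^{-1} ⊆ 𝒢^0}, and Γ̌^n := {T ∈ 𝒢^× : T̂ 𝒢^n T^{-1} ⊆ 𝒢^n}. Then: Γ^0 = 𝒢^×; Γ^n = 𝒢^× if n is odd and Γ^n = (𝒢^{(0)×} ∪ 𝒢^{(1)×})(𝒢^0 + rad 𝒢)^× if n is even; Γ̌^0 = 𝒢^{(0)×} ∪ 𝒢^{(1)×}; and Γ̌^n = (𝒢^{(0)×} ∪ 𝒢^{(1)×})(𝒢^0 + rad 𝒢)^× if n is odd and Γ̌^n = 𝒢^× if n is even. -/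

import Mathlib

/-!
Everything is read off from how the pseudoscalar `e_{1…n}` commutes with `𝒢`:
`x e_{1…n} = e_{1…n} x` for odd `n` and `x e_{1…n} = e_{1…n} x̂` for even `n`, and the right
annihilator of `e_{1…n}` is exactly `rad 𝒢`. (Write `x = b + ρ` with `b` in the subalgebra
generated by the non-null generators and `ρ ∈ rad 𝒢`; `e_{1…n}` kills the radical, and
contracting with the covectors dual to the null generators shows that `e_{1…n} b = 0` forces
`b = 0`.) Since `span {w}` is preserved by `U ↦ S U T⁻¹` iff `S w = μ w T` for a scalar `μ`,
the interesting cases reduce to `T̂ - μ T ∈ rad 𝒢`. Radical elements are nilpotent, so then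
`μ² = 1`, and `E = (T + μ T̂)/2` is an invertible homogeneous element with
`E⁻¹ T ∈ 𝔽 + rad 𝒢`.
-/

open Pointwise

noncomputable section

namespace ClGA

variable (𝔽 : Type*) [RCLike 𝔽] (p q r : ℕ)

/-- The diagonal weights: `p` ones, `q` minus-ones, `r` zeros. -/
def w : Fin (p + q + r) → 𝔽 := fun i =>
  if (i : ℕ) < p then 1 else if (i : ℕ) < p + q then -1 else 0

/-- The quadratic form on `𝔽^n` whose Gram matrix is `diag(1,…,1,−1,…,−1,0,…,0)`. -/
def Q : QuadraticForm 𝔽 (Fin (p + q + r) → 𝔽) :=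
  QuadraticMap.weightedSumSquares 𝔽 (w 𝔽 p q r)

/-- The degenerate Clifford geometric algebra `𝒢 = 𝒢_{p,q,r}`. -/
abbrev G := CliffordAlgebra (Q 𝔽 p q r)

/-- The generators `e_a`, `a = 1, …, n`. -/
def e (a : Fin (p + q + r)) : G 𝔽 p q r :=
  CliffordAlgebra.ι (Q 𝔽 p q r) (Pi.single a 1)

/-- The even subspace `𝒢^{(0)}`: the `+1`-eigenspace of the grade involution. -/
def Geven : Submodule 𝔽 (G 𝔽 p q r) where
  carrier := {x | CliffordAlgebra.involute x = x}
  add_mem' := by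
    intro a b ha hb
    simp only [Set.mem_setOf_eq, map_add] at ha hb ⊢
    rw [ha, hb]
  zero_mem' := by simp
  smul_mem' := by
    intro c x hx
    simp only [Set.mem_setOf_eq, map_smul] at hx ⊢
    rw [hx]

/-- The odd subspace `𝒢^{(1)}`: the `−1`-eigenspace of the grade involution. -/
def Godd : Submodule 𝔽 (G 𝔽 p q r) where
  carrier := {x | CliffordAlgebra.involute x = -x}
  add_mem' := by
    intro a b ha hb
    simp only [Set.mem_setOf_eq, map_add] at ha hb ⊢
    rw [ha, hb, neg_add]
  zero_mem' := by simp
  smul_mem' := by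
    intro c x hx
    simp only [Set.mem_setOf_eq, map_smul] at hx ⊢
    rw [hx, smul_neg]

/-- The grade-1 subspace `𝒢^1`, the span of the generators. -/
def G1 : Submodule 𝔽 (G 𝔽 p q r) := Submodule.span 𝔽 (Set.range (e 𝔽 p q r))

/-- The scalar (grade-0) subspace `𝒢^0 = 𝔽·1`. -/
def G0 : Submodule 𝔽 (G 𝔽 p q r) := Submodule.span 𝔽 {(1 : G 𝔽 p q r)}

/-- The element `e_{1…n} = e_1 e_2 ⋯ e_n`. -/
def eTop : G 𝔽 p q r := (List.ofFn (e 𝔽 p q r)).prod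

/-- The grade-`n` subspace `𝒢^n = 𝔽·e_{1…n}`. -/
def Gn : Submodule 𝔽 (G 𝔽 p q r) := Submodule.span 𝔽 {eTop 𝔽 p q r}

/-- The Grassmann subalgebra `Λ_r` generated by the null generators. -/
def Λr : Subalgebra 𝔽 (G 𝔽 p q r) :=
  Algebra.adjoin 𝔽 {x | ∃ a : Fin (p + q + r), p + q ≤ (a : ℕ) ∧ x = e 𝔽 p q r a}

/-- `Λ_r` viewed as a subspace of `𝒢`. -/
def Λrs : Submodule 𝔽 (G 𝔽 p q r) := Subalgebra.toSubmodule (Λr 𝔽 p q r)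

/-- The even part `Λ_r^{(0)} = Λ_r ∩ 𝒢^{(0)}`. -/
def Λr0 : Submodule 𝔽 (G 𝔽 p q r) := Λrs 𝔽 p q r ⊓ Geven 𝔽 p q r

/-- The Jacobson radical `rad 𝒢` of `𝒢`: the two-sided ideal generated by the
null generators. -/
def radG : Submodule 𝔽 (G 𝔽 p q r) :=
  Submodule.span 𝔽 {x | ∃ (u v : G 𝔽 p q r) (a : Fin (p + q + r)),
    p + q ≤ (a : ℕ) ∧ x = u * e 𝔽 p q r a * v}

/-- `rad 𝒢^{(0)} = rad 𝒢 ∩ 𝒢^{(0)}`. -/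
def radG0 : Submodule 𝔽 (G 𝔽 p q r) := radG 𝔽 p q r ⊓ Geven 𝔽 p q r

/-- For a subset `S ⊆ 𝒢`, `S^×` denotes those elements of `S` invertible in `𝒢`. -/
def ux (S : Set (G 𝔽 p q r)) : Set (G 𝔽 p q r) := {x ∈ S | IsUnit x}

/-- `𝒢^{(0)×} ∪ 𝒢^{(1)×}` (the group `P^±_{p,q,r}`). -/
def Epm : Set (G 𝔽 p q r) :=
  ux 𝔽 p q r ↑(Geven 𝔽 p q r) ∪ ux 𝔽 p q r ↑(Godd 𝔽 p q r)

/-- `(T⁻¹)^̂ · T`, the grade involution of the inverse times `T`. -/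
def tw (T : G 𝔽 p q r) : G 𝔽 p q r :=
  CliffordAlgebra.involute (Ring.inverse T) * T

/-- The invertible elements `T` with `T W T⁻¹ ⊆ W` (adjoint representation). -/
def gammaAd (W : Submodule 𝔽 (G 𝔽 p q r)) : Set (G 𝔽 p q r) :=
  {T | IsUnit T ∧ ∀ U ∈ W, T * U * Ring.inverse T ∈ W}

/-- The invertible elements `T` with `T̂ W T⁻¹ ⊆ W` (twisted adjoint representation). -/
def gammaTw (W : Submodule 𝔽 (G 𝔽 p q r)) : Set (G 𝔽 p q r) :=
  {T | IsUnit T ∧ ∀ U ∈ W, CliffordAlgebra.involute T * U * Ring.inverse T ∈ W}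

open CliffordAlgebra

lemma forall_mem_span_singleton_mul_inverse_mem_iff {R A : Type*} [CommSemiring R] [Ring A]
    [Algebra R A] {S T w : A} (hT : IsUnit T) :
    (∀ U ∈ Submodule.span R {w}, S * U * Ring.inverse T ∈ Submodule.span R {w}) ↔
      ∃ μ : R, S * w = μ • (w * T) := by
  have hcancel : ∀ x y : A, x * Ring.inverse T = y ↔ x = y * T := fun x y =>
    ⟨fun h => by rw [← h, mul_assoc, Ring.inverse_mul_cancel _ hT, mul_one],
     fun h => by rw [h, mul_assoc, Ring.mul_inverse_cancel _ hT, mul_one]⟩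
  constructor
  · intro h
    obtain ⟨μ, hμ⟩ := Submodule.mem_span_singleton.mp (h w (Submodule.mem_span_singleton_self w))
    exact ⟨μ, by rw [← smul_mul_assoc, ← hcancel, hμ]⟩
  · rintro ⟨μ, hμ⟩ U hU
    obtain ⟨c, rfl⟩ := Submodule.mem_span_singleton.mp hU
    have : S * w * Ring.inverse T = μ • w := by rw [hcancel, hμ, smul_mul_assoc]
    rw [mul_smul_comm, smul_mul_assoc, this, smul_smul]
    exact Submodule.smul_mem _ _ (Submodule.mem_span_singleton_self w)

lemma setOf_isUnit_and_eq {M : Type*} [Monoid M] {P : M → Prop} {S : Set M}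
    (hS : ∀ x ∈ S, IsUnit x) (h : ∀ x, IsUnit x → (P x ↔ x ∈ S)) :
    {x | IsUnit x ∧ P x} = S :=
  Set.ext fun x => ⟨fun hx => (h x hx.1).1 hx.2, fun hx => ⟨hS x hx, (h x (hS x hx)).2 hx⟩⟩

section

variable {𝔽 p q r}

lemma Q_apply (v : Fin (p + q + r) → 𝔽) :
    Q 𝔽 p q r v = ∑ i, w 𝔽 p q r i * (v i * v i) := by
  simp [Q, QuadraticMap.weightedSumSquares_apply, smul_eq_mul]

lemma w_eq_zero_of_le {c : Fin (p + q + r)} (hc : p + q ≤ c) : w 𝔽 p q r c = 0 := by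
  simp only [w]
  rw [if_neg (by omega), if_neg (by omega)]

lemma w_ne_zero_of_lt {a : Fin (p + q + r)} (ha : (a : ℕ) < p + q) : w 𝔽 p q r a ≠ 0 := by
  simp only [w]
  split_ifs <;> simp

lemma Q_single (a : Fin (p + q + r)) : Q 𝔽 p q r (Pi.single a 1) = w 𝔽 p q r a := by
  rw [Q_apply, Finset.sum_eq_single a (fun b _ hb => by simp [Pi.single_eq_of_ne hb]) (by simp)]
  simp

lemma polar_single (a : Fin (p + q + r)) (v : Fin (p + q + r) → 𝔽) :
    QuadraticMap.polar (Q 𝔽 p q r) (Pi.single a 1) v = 2 * w 𝔽 p q r a * v a := by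
  rw [QuadraticMap.polar, Q_apply, Q_apply, Q_apply, ← Finset.sum_sub_distrib,
    ← Finset.sum_sub_distrib, Finset.sum_eq_single a]
  · simp only [Pi.add_apply, Pi.single_eq_same]; ring
  · intro b _ hb
    simp only [Pi.add_apply, Pi.single_eq_of_ne hb]; ring
  · simp

lemma e_mul_self (a : Fin (p + q + r)) :
    e 𝔽 p q r a * e 𝔽 p q r a = algebraMap 𝔽 _ (w 𝔽 p q r a) := by
  rw [e, ι_sq_scalar, Q_single]

lemma e_mul_e_of_ne {a b : Fin (p + q + r)} (h : a ≠ b) :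
    e 𝔽 p q r a * e 𝔽 p q r b = -(e 𝔽 p q r b * e 𝔽 p q r a) := by
  have h2 := ι_mul_ι_add_swap (Q := Q 𝔽 p q r) (Pi.single a 1) (Pi.single b 1)
  rw [polar_single, Pi.single_eq_of_ne h, mul_zero, map_zero] at h2
  exact eq_neg_of_add_eq_zero_left h2

lemma isUnit_e {a : Fin (p + q + r)} (ha : (a : ℕ) < p + q) : IsUnit (e 𝔽 p q r a) := by
  have hw := w_ne_zero_of_lt (𝔽 := 𝔽) ha
  refine ⟨⟨e 𝔽 p q r a, (w 𝔽 p q r a)⁻¹ • e 𝔽 p q r a, ?_, ?_⟩, rfl⟩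
  · rw [mul_smul_comm, e_mul_self, Algebra.smul_def, ← map_mul, inv_mul_cancel₀ hw, map_one]
  · rw [smul_mul_assoc, e_mul_self, Algebra.smul_def, ← map_mul, inv_mul_cancel₀ hw, map_one]

lemma e_null_mul {c : Fin (p + q + r)} (hc : p + q ≤ c) (x : G 𝔽 p q r) :
    e 𝔽 p q r c * x = involute x * e 𝔽 p q r c := by
  induction x using CliffordAlgebra.induction with
  | algebraMap t => rw [AlgHom.commutes, Algebra.commutes]
  | ι v =>
    have h2 := ι_mul_ι_add_swap (Q := Q 𝔽 p q r) (Pi.single c 1) v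
    rw [polar_single, w_eq_zero_of_le hc, mul_zero, zero_mul, map_zero] at h2
    rw [e, involute_ι, neg_mul, eq_neg_of_add_eq_zero_left h2]
  | mul x y hx hy => rw [← mul_assoc, hx, mul_assoc, hy, map_mul, mul_assoc]
  | add x y hx hy => rw [mul_add, hx, hy, map_add, add_mul]

lemma mul_e_null {c : Fin (p + q + r)} (hc : p + q ≤ c) (x : G 𝔽 p q r) :
    x * e 𝔽 p q r c = e 𝔽 p q r c * involute x := by
  rw [e_null_mul hc, involute_involute]

lemma ι_eq_sum (v : Fin (p + q + r) → 𝔽) : ι (Q 𝔽 p q r) v = ∑ a, v a • e 𝔽 p q r a := by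
  conv_lhs => rw [pi_eq_sum_univ' v]
  simp [e]

variable (𝔽 p q r) in
def eProd (l : List (Fin (p + q + r))) : G 𝔽 p q r := (l.map (e 𝔽 p q r)).prod

@[simp] lemma eProd_nil : eProd 𝔽 p q r [] = 1 := rfl

lemma eProd_cons (a : Fin (p + q + r)) (l : List (Fin (p + q + r))) :
    eProd 𝔽 p q r (a :: l) = e 𝔽 p q r a * eProd 𝔽 p q r l := by
  simp [eProd]

lemma eProd_append (l₁ l₂ : List (Fin (p + q + r))) :
    eProd 𝔽 p q r (l₁ ++ l₂) = eProd 𝔽 p q r l₁ * eProd 𝔽 p q r l₂ := by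
  simp [eProd]

lemma eTop_eq_eProd : eTop 𝔽 p q r = eProd 𝔽 p q r (List.finRange (p + q + r)) := by
  rw [eTop, eProd, List.ofFn_eq_map]

lemma e_mul_eProd_of_notMem {a : Fin (p + q + r)} {l : List (Fin (p + q + r))} (h : a ∉ l) :
    e 𝔽 p q r a * eProd 𝔽 p q r l = (-1 : 𝔽) ^ l.length • (eProd 𝔽 p q r l * e 𝔽 p q r a) := by
  induction l with
  | nil => simp
  | cons b l ih =>
    rw [List.mem_cons, not_or] at h
    rw [eProd_cons, ← mul_assoc, e_mul_e_of_ne h.1, neg_mul, mul_assoc, ih h.2, mul_smul_comm,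
      List.length_cons, pow_succ, mul_neg_one, neg_smul, mul_assoc]

lemma eProd_mul_e_of_notMem {a : Fin (p + q + r)} {l : List (Fin (p + q + r))} (h : a ∉ l) :
    eProd 𝔽 p q r l * e 𝔽 p q r a = (-1 : 𝔽) ^ l.length • (e 𝔽 p q r a * eProd 𝔽 p q r l) := by
  rw [e_mul_eProd_of_notMem h, smul_smul, ← pow_add, ← two_mul, pow_mul, neg_one_sq, one_pow,
    one_smul]

lemma e_mul_eProd_of_mem {a : Fin (p + q + r)} {l : List (Fin (p + q + r))} (hl : l.Nodup)
    (ha : a ∈ l) :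
    e 𝔽 p q r a * eProd 𝔽 p q r l =
      (-1 : 𝔽) ^ (l.length + 1) • (eProd 𝔽 p q r l * e 𝔽 p q r a) := by
  obtain ⟨s, t, rfl⟩ := List.append_of_mem ha
  have hst := (List.nodup_middle.mp hl).notMem
  rw [List.mem_append, not_or] at hst
  set Z := eProd 𝔽 p q r s * (e 𝔽 p q r a * e 𝔽 p q r a) * eProd 𝔽 p q r t
  have hleft : e 𝔽 p q r a * eProd 𝔽 p q r (s ++ a :: t) = (-1 : 𝔽) ^ s.length • Z := by
    rw [eProd_append, eProd_cons, ← mul_assoc, e_mul_eProd_of_notMem hst.1, smul_mul_assoc]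
    simp only [Z, mul_assoc]
  have hright : eProd 𝔽 p q r (s ++ a :: t) * e 𝔽 p q r a = (-1 : 𝔽) ^ t.length • Z := by
    rw [eProd_append, eProd_cons, mul_assoc, mul_assoc, eProd_mul_e_of_notMem hst.2,
      mul_smul_comm, mul_smul_comm]
    simp only [Z, mul_assoc]
  have hlen : (s ++ a :: t).length + 1 + t.length = s.length + 2 * (t.length + 1) := by
    simp only [List.length_append, List.length_cons]; ring
  rw [hleft, hright, smul_smul, ← pow_add, hlen, pow_add, pow_mul, neg_one_sq, one_pow, mul_one]

lemma e_null_mul_eProd_of_mem {c : Fin (p + q + r)} (hc : p + q ≤ c)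
    {l : List (Fin (p + q + r))} (h : c ∈ l) : e 𝔽 p q r c * eProd 𝔽 p q r l = 0 := by
  induction l with
  | nil => cases h
  | cons d l ih =>
    rw [eProd_cons, ← mul_assoc]
    rcases eq_or_ne c d with rfl | hcd
    · rw [e_mul_self, w_eq_zero_of_le hc, map_zero, zero_mul]
    · rw [e_mul_e_of_ne hcd, neg_mul, mul_assoc, ih ((List.mem_cons.mp h).resolve_left hcd),
        mul_zero, neg_zero]

lemma e_mul_eTop (a : Fin (p + q + r)) :
    e 𝔽 p q r a * eTop 𝔽 p q r = (-1 : 𝔽) ^ (p + q + r + 1) • (eTop 𝔽 p q r * e 𝔽 p q r a) := by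
  rw [eTop_eq_eProd, e_mul_eProd_of_mem (List.nodup_finRange _) (List.mem_finRange a),
    List.length_finRange]

lemma eTop_mul_e_null {c : Fin (p + q + r)} (hc : p + q ≤ c) :
    eTop 𝔽 p q r * e 𝔽 p q r c = 0 := by
  have h := e_mul_eTop (𝔽 := 𝔽) c
  rw [eTop_eq_eProd, e_null_mul_eProd_of_mem hc (List.mem_finRange c), eq_comm,
    smul_eq_zero] at h
  rw [eTop_eq_eProd]
  exact h.resolve_left (pow_ne_zero _ (neg_ne_zero.mpr one_ne_zero))

lemma mul_eTop_of_odd (hn : Odd (p + q + r)) (x : G 𝔽 p q r) :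
    x * eTop 𝔽 p q r = eTop 𝔽 p q r * x := by
  induction x using CliffordAlgebra.induction with
  | algebraMap t => rw [Algebra.commutes]
  | ι v =>
    rw [ι_eq_sum, Finset.sum_mul, Finset.mul_sum]
    refine Finset.sum_congr rfl fun a _ => ?_
    rw [smul_mul_assoc, e_mul_eTop, (hn.add_one).neg_one_pow, one_smul, mul_smul_comm]
  | mul x y hx hy => rw [mul_assoc, hy, ← mul_assoc, hx, mul_assoc]
  | add x y hx hy => rw [add_mul, hx, hy, mul_add]

lemma mul_eTop_of_even (hn : Even (p + q + r)) (x : G 𝔽 p q r) :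
    x * eTop 𝔽 p q r = eTop 𝔽 p q r * involute x := by
  induction x using CliffordAlgebra.induction with
  | algebraMap t => rw [AlgHom.commutes, Algebra.commutes]
  | ι v =>
    rw [involute_ι, mul_neg, ι_eq_sum, Finset.sum_mul, Finset.mul_sum, ← Finset.sum_neg_distrib]
    refine Finset.sum_congr rfl fun a _ => ?_
    rw [smul_mul_assoc, e_mul_eTop, (hn.add_one).neg_one_pow, neg_one_smul, mul_smul_comm,
      smul_neg]
  | mul x y hx hy => rw [mul_assoc, hy, ← mul_assoc, hx, mul_assoc, map_mul]
  | add x y hx hy => rw [add_mul, hx, hy, map_add, mul_add]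

lemma mul_mem_radG_left (x : G 𝔽 p q r) {y : G 𝔽 p q r} (hy : y ∈ radG 𝔽 p q r) :
    x * y ∈ radG 𝔽 p q r := by
  induction hy using Submodule.span_induction with
  | mem z hz =>
    obtain ⟨u, v, c, hc, rfl⟩ := hz
    exact Submodule.subset_span ⟨x * u, v, c, hc, by noncomm_ring⟩
  | zero => rw [mul_zero]; exact zero_mem _
  | add a b _ _ ha hb => rw [mul_add]; exact add_mem ha hb
  | smul t a _ ha => rw [mul_smul_comm]; exact Submodule.smul_mem _ _ ha

lemma mul_mem_radG_right {x : G 𝔽 p q r} (hx : x ∈ radG 𝔽 p q r) (y : G 𝔽 p q r) :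
    x * y ∈ radG 𝔽 p q r := by
  induction hx using Submodule.span_induction with
  | mem z hz =>
    obtain ⟨u, v, c, hc, rfl⟩ := hz
    exact Submodule.subset_span ⟨u, v * y, c, hc, by noncomm_ring⟩
  | zero => rw [zero_mul]; exact zero_mem _
  | add a b _ _ ha hb => rw [add_mul]; exact add_mem ha hb
  | smul t a _ ha => rw [smul_mul_assoc]; exact Submodule.smul_mem _ _ ha

lemma involute_mem_radG {x : G 𝔽 p q r} (hx : x ∈ radG 𝔽 p q r) :
    involute x ∈ radG 𝔽 p q r := by
  induction hx using Submodule.span_induction with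
  | mem z hz =>
    obtain ⟨u, v, c, hc, rfl⟩ := hz
    rw [map_mul, map_mul, e, involute_ι, mul_neg, neg_mul]
    exact neg_mem (Submodule.subset_span ⟨_, _, c, hc, rfl⟩)
  | zero => rw [map_zero]; exact zero_mem _
  | add a b _ _ ha hb => rw [map_add]; exact add_mem ha hb
  | smul t a _ ha => rw [map_smul]; exact Submodule.smul_mem _ _ ha

lemma e_null_mem_radG {c : Fin (p + q + r)} (hc : p + q ≤ c) : e 𝔽 p q r c ∈ radG 𝔽 p q r :=
  Submodule.subset_span ⟨1, 1, c, hc, by rw [one_mul, mul_one]⟩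

lemma eTop_mul_eq_zero_of_mem_radG {x : G 𝔽 p q r} (hx : x ∈ radG 𝔽 p q r) :
    eTop 𝔽 p q r * x = 0 := by
  induction hx using Submodule.span_induction with
  | mem z hz =>
    obtain ⟨u, v, c, hc, rfl⟩ := hz
    rw [mul_e_null hc, ← mul_assoc, ← mul_assoc, eTop_mul_e_null hc, zero_mul, zero_mul]
  | zero => rw [mul_zero]
  | add a b _ _ ha hb => rw [mul_add, ha, hb, add_zero]
  | smul t a _ ha => rw [mul_smul_comm, ha, smul_zero]

lemma eProd_eq_zero_of_not_nodup {l : List (Fin (p + q + r))} (hl : ∀ c ∈ l, p + q ≤ c)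
    (hdup : ¬ l.Nodup) : eProd 𝔽 p q r l = 0 := by
  induction l with
  | nil => exact absurd List.nodup_nil hdup
  | cons c l ih =>
    rw [List.forall_mem_cons] at hl
    rw [eProd_cons]
    by_cases hc : c ∈ l
    · exact e_null_mul_eProd_of_mem hl.1 hc
    · rw [ih hl.2 (fun h => hdup (List.nodup_cons.mpr ⟨hc, h⟩)), mul_zero]

lemma length_le_of_nodup_of_null {l : List (Fin (p + q + r))} (hl : ∀ c ∈ l, p + q ≤ c)
    (hnd : l.Nodup) : l.length ≤ r := by
  have hsub : (l.map Fin.val).toFinset ⊆ Finset.Ico (p + q) (p + q + r) := by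
    intro i hi
    obtain ⟨c, hc, rfl⟩ := List.mem_map.mp (List.mem_toFinset.mp hi)
    exact Finset.mem_Ico.mpr ⟨hl c hc, c.isLt⟩
  have := Finset.card_le_card hsub
  rwa [List.toFinset_card_of_nodup (hnd.map Fin.val_injective), List.length_map,
    Nat.card_Ico, Nat.add_sub_cancel_left] at this

variable (𝔽 p q r) in
def nullSpan (k : ℕ) : Submodule 𝔽 (G 𝔽 p q r) :=
  Submodule.span 𝔽 {x | ∃ (l : List (Fin (p + q + r))) (y : G 𝔽 p q r),
    l.length = k ∧ (∀ c ∈ l, p + q ≤ c) ∧ x = eProd 𝔽 p q r l * y}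

lemma radG_le_nullSpan_one : radG 𝔽 p q r ≤ nullSpan 𝔽 p q r 1 := by
  rw [radG, Submodule.span_le]
  rintro x ⟨u, v, c, hc, rfl⟩
  refine Submodule.subset_span ⟨[c], involute u * v, rfl, by simpa using hc, ?_⟩
  rw [eProd_cons, eProd_nil, mul_one, mul_e_null hc, mul_assoc]

lemma nullSpan_mul_nullSpan_one_le (k : ℕ) :
    nullSpan 𝔽 p q r k * nullSpan 𝔽 p q r 1 ≤ nullSpan 𝔽 p q r (k + 1) := by
  rw [nullSpan, nullSpan, Submodule.span_mul_span, Submodule.span_le]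
  rintro _ ⟨_, ⟨l, y, hlen, hl, rfl⟩, _, ⟨l', y', hlen', hl', rfl⟩, rfl⟩
  obtain ⟨c, rfl⟩ := List.length_eq_one_iff.mp hlen'
  have hc : p + q ≤ c := hl' c (List.mem_singleton_self c)
  refine Submodule.subset_span ⟨l ++ [c], involute y * y', by simp [hlen],
    by simpa [or_imp, forall_and] using ⟨hl, hc⟩, ?_⟩
  simp only [eProd_append, eProd_cons, eProd_nil, mul_one]
  rw [mul_assoc, ← mul_assoc y, mul_e_null hc]
  simp only [mul_assoc]

lemma nullSpan_eq_bot {k : ℕ} (hk : r < k) : nullSpan 𝔽 p q r k = ⊥ := by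
  rw [nullSpan, Submodule.span_eq_bot]
  rintro _ ⟨l, y, hlen, hl, rfl⟩
  have hdup : ¬ l.Nodup := fun hnd => by
    have := length_le_of_nodup_of_null hl hnd
    omega
  rw [eProd_eq_zero_of_not_nodup hl hdup, zero_mul]

lemma radG_pow_le_nullSpan (k : ℕ) : radG 𝔽 p q r ^ (k + 1) ≤ nullSpan 𝔽 p q r (k + 1) := by
  induction k with
  | zero => rw [zero_add, pow_one]; exact radG_le_nullSpan_one
  | succ k ih =>
    rw [pow_succ]
    exact (mul_le_mul' ih radG_le_nullSpan_one).trans (nullSpan_mul_nullSpan_one_le _)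

lemma pow_eq_zero_of_mem_radG {x : G 𝔽 p q r} (hx : x ∈ radG 𝔽 p q r) : x ^ (r + 1) = 0 := by
  have := radG_pow_le_nullSpan r (Submodule.pow_mem_pow _ hx (r + 1))
  rwa [nullSpan_eq_bot (Nat.lt_succ_self r), Submodule.mem_bot] at this

lemma not_isUnit_of_mem_radG {x : G 𝔽 p q r} (hx : x ∈ radG 𝔽 p q r) : ¬ IsUnit x := fun hu =>
  not_isUnit_zero (pow_eq_zero_of_mem_radG hx ▸ hu.pow (r + 1))

lemma isUnit_of_sub_mem_radG {T E : G 𝔽 p q r} (hT : IsUnit T) (h : E - T ∈ radG 𝔽 p q r) :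
    IsUnit E := by
  have hnil : IsNilpotent (Ring.inverse T * (E - T)) :=
    ⟨r + 1, pow_eq_zero_of_mem_radG (mul_mem_radG_left _ h)⟩
  have hE : E = T * (1 + Ring.inverse T * (E - T)) := by
    rw [mul_add, mul_one, ← mul_assoc, Ring.mul_inverse_cancel _ hT, one_mul, add_sub_cancel]
  rw [hE]
  exact hT.mul hnil.isUnit_one_add

variable (𝔽 p q r) in
def nonNullSubalgebra : Subalgebra 𝔽 (G 𝔽 p q r) :=
  Algebra.adjoin 𝔽 {x | ∃ a : Fin (p + q + r), (a : ℕ) < p + q ∧ x = e 𝔽 p q r a}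

lemma exists_eq_add_of_mem_nonNullSubalgebra_of_mem_radG (x : G 𝔽 p q r) :
    ∃ b ∈ nonNullSubalgebra 𝔽 p q r, ∃ ρ ∈ radG 𝔽 p q r, x = b + ρ := by
  induction x using CliffordAlgebra.induction with
  | algebraMap t => exact ⟨_, Subalgebra.algebraMap_mem _ t, 0, zero_mem _, (add_zero _).symm⟩
  | ι v =>
    refine ⟨∑ a ∈ Finset.univ.filter (fun a : Fin (p + q + r) => (a : ℕ) < p + q),
        v a • e 𝔽 p q r a, ?_,
      ∑ a ∈ Finset.univ.filter (fun a : Fin (p + q + r) => ¬ (a : ℕ) < p + q),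
        v a • e 𝔽 p q r a, ?_, ?_⟩
    · refine Subalgebra.sum_mem _ fun a ha => Subalgebra.smul_mem _ ?_ _
      exact Algebra.subset_adjoin ⟨a, (Finset.mem_filter.mp ha).2, rfl⟩
    · refine Submodule.sum_mem _ fun a ha => Submodule.smul_mem _ _ ?_
      exact e_null_mem_radG (not_lt.mp (Finset.mem_filter.mp ha).2)
    · rw [ι_eq_sum, Finset.sum_filter_add_sum_filter_not]
  | mul x y hx hy =>
    obtain ⟨b, hb, ρ, hρ, rfl⟩ := hx
    obtain ⟨b', hb', ρ', hρ', rfl⟩ := hy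
    refine ⟨b * b', Subalgebra.mul_mem _ hb hb', b * ρ' + ρ * (b' + ρ'),
      add_mem (mul_mem_radG_left b hρ') (mul_mem_radG_right hρ _), by noncomm_ring⟩
  | add x y hx hy =>
    obtain ⟨b, hb, ρ, hρ, rfl⟩ := hx
    obtain ⟨b', hb', ρ', hρ', rfl⟩ := hy
    exact ⟨b + b', Subalgebra.add_mem _ hb hb', ρ + ρ', add_mem hρ hρ', by abel⟩

lemma contractLeft_mul (d : Module.Dual 𝔽 (Fin (p + q + r) → 𝔽)) (x y : G 𝔽 p q r) :
    contractLeft d (x * y) = contractLeft d x * y + involute x * contractLeft d y := by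
  induction x using CliffordAlgebra.induction generalizing y with
  | algebraMap t =>
    rw [contractLeft_algebraMap_mul, contractLeft_algebraMap, zero_mul, zero_add,
      AlgHom.commutes]
  | ι v =>
    rw [contractLeft_ι_mul, contractLeft_ι, involute_ι, Algebra.smul_def, neg_mul,
      sub_eq_add_neg]
  | mul x₁ x₂ h1 h2 =>
    rw [mul_assoc, h1, h2, h1, map_mul]
    noncomm_ring
  | add x₁ x₂ h1 h2 =>
    rw [add_mul, map_add, h1, h2, map_add, map_add, add_mul, add_mul]
    abel

lemma contractLeft_proj_eq_zero_of_mem_nonNullSubalgebra {c : Fin (p + q + r)} (hc : p + q ≤ c)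
    {b : G 𝔽 p q r} (hb : b ∈ nonNullSubalgebra 𝔽 p q r) :
    contractLeft (Q := Q 𝔽 p q r) (LinearMap.proj c) b = 0 := by
  induction hb using Algebra.adjoin_induction with
  | mem z hz =>
    obtain ⟨a, ha, rfl⟩ := hz
    have hca : c ≠ a := fun h => by omega
    simp [e, contractLeft_ι, Pi.single_eq_of_ne hca]
  | algebraMap t => rw [contractLeft_algebraMap]
  | add x y _ _ hx hy => rw [map_add, hx, hy, add_zero]
  | mul x y _ _ hx hy => rw [contractLeft_mul, hx, hy, zero_mul, mul_zero, add_zero]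

lemma contractLeft_proj_eProd_of_notMem {c : Fin (p + q + r)} {l : List (Fin (p + q + r))}
    (h : c ∉ l) : contractLeft (Q := Q 𝔽 p q r) (LinearMap.proj c) (eProd 𝔽 p q r l) = 0 := by
  induction l with
  | nil => rw [eProd_nil, contractLeft_one]
  | cons d l ih =>
    rw [List.mem_cons, not_or] at h
    rw [eProd_cons, e, contractLeft_ι_mul, ih h.2, mul_zero, sub_zero]
    simp [Pi.single_eq_of_ne h.1]

lemma eq_zero_of_eProd_mul_eq_zero {l : List (Fin (p + q + r))} (hl : ∀ c ∈ l, p + q ≤ c)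
    (hnd : l.Nodup) {b : G 𝔽 p q r} (hb : b ∈ nonNullSubalgebra 𝔽 p q r)
    (h : eProd 𝔽 p q r l * b = 0) : b = 0 := by
  induction l with
  | nil => rwa [eProd_nil, one_mul] at h
  | cons c l ih =>
    rw [List.forall_mem_cons] at hl
    rw [List.nodup_cons] at hnd
    refine ih hl.2 hnd.2 ?_
    -- contracting with the covector dual to `e_c` strips the leading factor
    have hrest : contractLeft (Q := Q 𝔽 p q r) (LinearMap.proj c) (eProd 𝔽 p q r l * b) = 0 := by
      rw [contractLeft_mul, contractLeft_proj_eProd_of_notMem hnd.1,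
        contractLeft_proj_eq_zero_of_mem_nonNullSubalgebra hl.1 hb, zero_mul, mul_zero,
        add_zero]
    have := congrArg (contractLeft (Q := Q 𝔽 p q r) (LinearMap.proj c)) h
    rwa [eProd_cons, mul_assoc, e, contractLeft_ι_mul, hrest, mul_zero, sub_zero,
      LinearMap.proj_apply, Pi.single_eq_same, one_smul, map_zero] at this

lemma eTop_eq_mul :
    eTop 𝔽 p q r = eProd 𝔽 p q r (List.ofFn (Fin.castAdd r)) *
      eProd 𝔽 p q r (List.ofFn (Fin.natAdd (p + q))) := by
  rw [eTop, List.ofFn_add, List.prod_append, eProd, eProd, List.map_ofFn, List.map_ofFn]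
  rfl

lemma eTop_mul_eq_zero_iff {x : G 𝔽 p q r} : eTop 𝔽 p q r * x = 0 ↔ x ∈ radG 𝔽 p q r := by
  refine ⟨fun h => ?_, eTop_mul_eq_zero_of_mem_radG⟩
  obtain ⟨b, hb, ρ, hρ, rfl⟩ := exists_eq_add_of_mem_nonNullSubalgebra_of_mem_radG x
  have hunit : IsUnit (eProd 𝔽 p q r (List.ofFn (Fin.castAdd r))) := by
    refine List.prod_isUnit fun x hx => ?_
    obtain ⟨a, ha, rfl⟩ := List.mem_map.mp hx
    obtain ⟨i, rfl⟩ := List.mem_ofFn.mp ha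
    exact isUnit_e (by simp)
  rw [mul_add, eTop_mul_eq_zero_of_mem_radG hρ, add_zero, eTop_eq_mul, mul_assoc,
    hunit.mul_right_eq_zero] at h
  have hnull : ∀ c ∈ List.ofFn (Fin.natAdd (p + q) : Fin r → Fin (p + q + r)), p + q ≤ c := by
    simp [List.mem_ofFn]
  rw [eq_zero_of_eProd_mul_eq_zero hnull
    (List.nodup_ofFn.mpr (Fin.natAdd_injective _ _)) hb h, zero_add]
  exact hρ

lemma mul_self_eq_one_of_involute_sub_smul_mem_radG {T : G 𝔽 p q r} (hT : IsUnit T) {μ : 𝔽}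
    (h : involute T - μ • T ∈ radG 𝔽 p q r) : μ * μ = 1 := by
  have hrad : (1 - μ * μ) • T ∈ radG 𝔽 p q r := by
    have := add_mem (involute_mem_radG h) (Submodule.smul_mem _ μ h)
    rw [map_sub, map_smul, involute_involute] at this
    convert this using 1
    module
  by_contra hμ
  exact not_isUnit_of_mem_radG
    ((Submodule.smul_mem_iff _ (sub_ne_zero.mpr (Ne.symm hμ))).mp hrad) hT

lemma mem_Epm_iff {T : G 𝔽 p q r} :
    T ∈ Epm 𝔽 p q r ↔ IsUnit T ∧ ∃ μ : 𝔽, involute T = μ • T := by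
  constructor
  · rintro (⟨hT, hu⟩ | ⟨hT, hu⟩)
    · exact ⟨hu, 1, by rw [one_smul]; exact hT⟩
    · exact ⟨hu, -1, by rw [neg_one_smul]; exact hT⟩
  · rintro ⟨hu, μ, hμ⟩
    have hsq := mul_self_eq_one_of_involute_sub_smul_mem_radG hu
      (by rw [hμ, sub_self]; exact zero_mem _)
    rcases mul_self_eq_one_iff.mp hsq with rfl | rfl
    · rw [one_smul] at hμ
      exact Or.inl ⟨hμ, hu⟩
    · rw [neg_one_smul] at hμ
      exact Or.inr ⟨hμ, hu⟩

lemma isUnit_of_mem_Epm_mul {T : G 𝔽 p q r}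
    (h : T ∈ Epm 𝔽 p q r * ux 𝔽 p q r ↑(G0 𝔽 p q r ⊔ radG 𝔽 p q r)) : IsUnit T := by
  obtain ⟨E, hE, V, hV, rfl⟩ := h
  exact (mem_Epm_iff.mp hE).1.mul hV.2

lemma involute_sub_self_mem_radG {V : G 𝔽 p q r} (hV : V ∈ G0 𝔽 p q r ⊔ radG 𝔽 p q r) :
    involute V - V ∈ radG 𝔽 p q r := by
  obtain ⟨y, hy, z, hz, rfl⟩ := Submodule.mem_sup.mp hV
  obtain ⟨c, rfl⟩ := Submodule.mem_span_singleton.mp hy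
  rw [map_add, map_smul, map_one, add_sub_add_left_eq_sub]
  exact sub_mem (involute_mem_radG hz) hz

theorem exists_involute_sub_smul_mem_radG_iff {T : G 𝔽 p q r} (hT : IsUnit T) :
    (∃ μ : 𝔽, involute T - μ • T ∈ radG 𝔽 p q r) ↔
      T ∈ Epm 𝔽 p q r * ux 𝔽 p q r ↑(G0 𝔽 p q r ⊔ radG 𝔽 p q r) := by
  constructor
  · rintro ⟨μ, hμ⟩
    have hsq := mul_self_eq_one_of_involute_sub_smul_mem_radG hT hμ
    -- the `μ`-homogeneous part of `T`, which differs from `T` by a radical element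
    set E := (2⁻¹ : 𝔽) • (T + μ • involute T)
    have hET : E - T = (2⁻¹ * μ) • (involute T - μ • T) := by
      linear_combination (norm := module) (2⁻¹ : 𝔽) • hsq • T
    have hEu : IsUnit E := isUnit_of_sub_mem_radG hT (hET ▸ Submodule.smul_mem _ _ hμ)
    have hE : involute E = μ • E := by
      simp only [E, map_smul, map_add, involute_involute]
      linear_combination (norm := module) (-(2⁻¹ : 𝔽)) • hsq • involute T
    refine ⟨E, mem_Epm_iff.mpr ⟨hEu, μ, hE⟩, Ring.inverse E * T, ⟨?_, ?_⟩, ?_⟩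
    · have hV : Ring.inverse E * T = 1 - Ring.inverse E * (E - T) := by
        rw [mul_sub, Ring.inverse_mul_cancel _ hEu, sub_sub_cancel]
      rw [SetLike.mem_coe, hV]
      exact sub_mem (Submodule.mem_sup_left (Submodule.mem_span_singleton_self 1))
        (Submodule.mem_sup_right (mul_mem_radG_left _ (hET ▸ Submodule.smul_mem _ _ hμ)))
    · exact (hEu.ringInverse).mul hT
    · show E * (Ring.inverse E * T) = T
      rw [← mul_assoc, Ring.mul_inverse_cancel _ hEu, one_mul]
  · rintro ⟨E, hE, V, ⟨hV, -⟩, rfl⟩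
    obtain ⟨-, μ, hμ⟩ := mem_Epm_iff.mp hE
    refine ⟨μ, ?_⟩
    have : involute (E * V) - μ • (E * V) = μ • (E * (involute V - V)) := by
      rw [map_mul, hμ, mul_sub, smul_sub, smul_mul_assoc]
    rw [this]
    exact Submodule.smul_mem _ _ (mul_mem_radG_left _ (involute_sub_self_mem_radG hV))

lemma exists_eTop_mul_involute_eq_smul_iff {T : G 𝔽 p q r} (hT : IsUnit T) :
    (∃ μ : 𝔽, eTop 𝔽 p q r * involute T = μ • (eTop 𝔽 p q r * T)) ↔
      T ∈ Epm 𝔽 p q r * ux 𝔽 p q r ↑(G0 𝔽 p q r ⊔ radG 𝔽 p q r) := by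
  rw [← exists_involute_sub_smul_mem_radG_iff hT]
  refine exists_congr fun μ => ?_
  rw [← eTop_mul_eq_zero_iff, mul_sub, mul_smul_comm, sub_eq_zero]

lemma gammaAd_G0 : gammaAd 𝔽 p q r (G0 𝔽 p q r) = {x | IsUnit x} :=
  setOf_isUnit_and_eq (fun _ => id) fun T hT => by
    rw [G0, forall_mem_span_singleton_mul_inverse_mem_iff hT]
    exact iff_of_true ⟨1, by rw [mul_one, one_mul, one_smul]⟩ hT

lemma gammaAd_Gn_of_odd (hn : Odd (p + q + r)) :
    gammaAd 𝔽 p q r (Gn 𝔽 p q r) = {x | IsUnit x} :=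
  setOf_isUnit_and_eq (fun _ => id) fun T hT => by
    rw [Gn, forall_mem_span_singleton_mul_inverse_mem_iff hT, mul_eTop_of_odd hn]
    exact iff_of_true ⟨1, (one_smul _ _).symm⟩ hT

lemma gammaAd_Gn_of_even (hn : Even (p + q + r)) :
    gammaAd 𝔽 p q r (Gn 𝔽 p q r) = Epm 𝔽 p q r * ux 𝔽 p q r ↑(G0 𝔽 p q r ⊔ radG 𝔽 p q r) :=
  setOf_isUnit_and_eq (fun _ => isUnit_of_mem_Epm_mul) fun T hT => by
    rw [Gn, forall_mem_span_singleton_mul_inverse_mem_iff hT, mul_eTop_of_even hn]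
    exact exists_eTop_mul_involute_eq_smul_iff hT

lemma gammaTw_G0 : gammaTw 𝔽 p q r (G0 𝔽 p q r) = Epm 𝔽 p q r :=
  setOf_isUnit_and_eq (fun _ h => (mem_Epm_iff.mp h).1) fun T hT => by
    rw [G0, forall_mem_span_singleton_mul_inverse_mem_iff hT, mem_Epm_iff]
    simp only [mul_one, one_mul, hT, true_and]

lemma gammaTw_Gn_of_odd (hn : Odd (p + q + r)) :
    gammaTw 𝔽 p q r (Gn 𝔽 p q r) = Epm 𝔽 p q r * ux 𝔽 p q r ↑(G0 𝔽 p q r ⊔ radG 𝔽 p q r) :=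
  setOf_isUnit_and_eq (fun _ => isUnit_of_mem_Epm_mul) fun T hT => by
    rw [Gn, forall_mem_span_singleton_mul_inverse_mem_iff hT, mul_eTop_of_odd hn]
    exact exists_eTop_mul_involute_eq_smul_iff hT

lemma gammaTw_Gn_of_even (hn : Even (p + q + r)) :
    gammaTw 𝔽 p q r (Gn 𝔽 p q r) = {x | IsUnit x} :=
  setOf_isUnit_and_eq (fun _ => id) fun T hT => by
    rw [Gn, forall_mem_span_singleton_mul_inverse_mem_iff hT, mul_eTop_of_even hn,
      involute_involute]
    exact iff_of_true ⟨1, (one_smul _ _).symm⟩ hT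

end

theorem stmt18 :
    gammaAd 𝔽 p q r (G0 𝔽 p q r) = {x : G 𝔽 p q r | IsUnit x} ∧
    (Odd (p + q + r) → gammaAd 𝔽 p q r (Gn 𝔽 p q r) = {x : G 𝔽 p q r | IsUnit x}) ∧
    (Even (p + q + r) →
      gammaAd 𝔽 p q r (Gn 𝔽 p q r) = Epm 𝔽 p q r * ux 𝔽 p q r ↑(G0 𝔽 p q r ⊔ radG 𝔽 p q r)) ∧
    gammaTw 𝔽 p q r (G0 𝔽 p q r) = Epm 𝔽 p q r ∧
    (Odd (p + q + r) →
      gammaTw 𝔽 p q r (Gn 𝔽 p q r) = Epm 𝔽 p q r * ux 𝔽 p q r ↑(G0 𝔽 p q r ⊔ radG 𝔽 p q r)) ∧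
    (Even (p + q + r) → gammaTw 𝔽 p q r (Gn 𝔽 p q r) = {x : G 𝔽 p q r | IsUnit x}) :=
  ⟨gammaAd_G0, gammaAd_Gn_of_odd, gammaAd_Gn_of_even, gammaTw_G0, gammaTw_Gn_of_odd,
    gammaTw_Gn_of_even⟩
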